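/- For every fixed r ≥ 1, there exist constants c_r and d_r such that P(d + r, d) = c_r for all d ≥ d_r. -/

import Mathlib

/-- The Chebyshev distance between two permutations of `{1,…,n}`
(represented as permutations of `Fin n`): `max_i |σ(i) − τ(i)|`. -/
def permDist {n : ℕ} (σ τ : Equiv.Perm (Fin n)) : ℕ :=
  Finset.univ.sup fun i => Nat.dist (σ i : ℕ) (τ i : ℕ)

/-- `P n d` is the maximum cardinality of a set of permutations of `{1,…,n}`
whose pairwise Chebyshev distance is at least `d`. -/
noncomputable def P (n d : ℕ) : ℕ :=
  sSup {k | ∃ A : Finset (Equiv.Perm (Fin n)),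
    (∀ σ ∈ A, ∀ τ ∈ A, σ ≠ τ → d ≤ permDist σ τ) ∧ A.card = k}

/-! A code of minimum distance `d` in `Perm (Fin (d + r))` is separated on the `2r` extreme values
`{0, …, r - 1} ∪ {d, …, d + r - 1}`: two codewords differ at a position where both take extreme
values. A family of permutations separated on a set `E` has size bounded in terms of `#E` alone,
so `P (d + r) d ≤ ((2r + 1)!) ^ 2`. Inserting a fixed point at `r` turns a code of distance `d` in
`Perm (Fin (d + r))` into one of distance `d + 1` in `Perm (Fin (d + r + 1))`, so `P (d + r) d` is
nondecreasing for `d ≥ r`; being bounded, it is eventually constant. -/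

open Finset Equiv
open scoped Nat

section Separation

variable {α : Type*} [DecidableEq α]

def SeparatedOn (E : Finset α) (A : Finset (Perm α)) : Prop :=
  ∀ σ ∈ A, ∀ τ ∈ A, σ ≠ τ → ∃ i, σ i ∈ E ∧ τ i ∈ E ∧ σ i ≠ τ i

theorem SeparatedOn.filter_apply_eq {E : Finset α} {A : Finset (Perm α)} (hA : SeparatedOn E A)
    (j u : α) : SeparatedOn (E.erase u) (A.filter fun τ => τ j = u) := by
  intro σ hσ τ hτ hne
  rw [mem_filter] at hσ hτ
  obtain ⟨i, hσi, hτi, hi⟩ := hA σ hσ.1 τ hτ.1 hne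
  have hσu : σ i ≠ u := fun h => hi (by rw [h, ← hτ.2, σ.injective (h.trans hσ.2.symm)])
  have hτu : τ i ≠ u := fun h => hi (by rw [h, ← hσ.2, τ.injective (h.trans hτ.2.symm)])
  exact ⟨i, mem_erase.2 ⟨hσu, hσi⟩, mem_erase.2 ⟨hτu, hτi⟩, hi⟩

/- Fix `τ₀ ∈ A`. Every other `τ ∈ A` satisfies `τ (τ₀⁻¹ x) = u` for some `x, u ∈ E`, and each such
class is separated on `E.erase u`; this gives `#A ≤ 1 + #E ^ 2 * (#E)! ^ 2`. -/
theorem card_le_of_separatedOn {E : Finset α} {A : Finset (Perm α)} (hA : SeparatedOn E A) :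
    #A ≤ (#E + 1)! ^ 2 := by
  induction E using Finset.strongInduction generalizing A with
  | H E ih =>
  classical
  obtain rfl | ⟨τ₀, hτ₀⟩ := A.eq_empty_or_nonempty
  · simp
  let cls : α × α → Finset (Perm α) := fun xu => A.filter fun τ => τ (τ₀⁻¹ xu.1) = xu.2
  have cover : A ⊆ insert τ₀ ((E ×ˢ E).biUnion cls) := by
    intro τ hτ
    rcases eq_or_ne τ τ₀ with rfl | hne
    · exact mem_insert_self _ _
    obtain ⟨i, hx, hu, -⟩ := hA τ₀ hτ₀ τ hτ hne.symm
    exact mem_insert_of_mem (mem_biUnion.2 ⟨(τ₀ i, τ i), mem_product.2 ⟨hx, hu⟩,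
      mem_filter.2 ⟨hτ, by simp⟩⟩)
  have hcls : ∀ xu ∈ E ×ˢ E, #(cls xu) ≤ (#E)! ^ 2 := by
    rintro ⟨x, u⟩ hxu
    have hu : u ∈ E := (mem_product.1 hxu).2
    have := ih _ (erase_ssubset hu) (hA.filter_apply_eq (τ₀⁻¹ x) u)
    rwa [card_erase_of_mem hu, Nat.sub_add_cancel (card_pos.2 ⟨u, hu⟩)] at this
  calc #A ≤ #((E ×ˢ E).biUnion cls) + 1 := (card_le_card cover).trans (card_insert_le _ _)
    _ ≤ ∑ xu ∈ E ×ˢ E, #(cls xu) + 1 := by gcongr; exact card_biUnion_le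
    _ ≤ #(E ×ˢ E) * (#E)! ^ 2 + 1 := by gcongr; simpa using sum_le_card_nsmul _ _ _ hcls
    _ ≤ (#E + 1)! ^ 2 := by
        rw [card_product, Nat.factorial_succ]
        nlinarith [Nat.factorial_pos #E]

end Separation

section PermCode

variable {n : ℕ}

def IsPermCode (d : ℕ) (A : Finset (Perm (Fin n))) : Prop :=
  ∀ σ ∈ A, ∀ τ ∈ A, σ ≠ τ → d ≤ permDist σ τ

theorem dist_le_permDist (σ τ : Perm (Fin n)) (i : Fin n) :
    Nat.dist (σ i) (τ i) ≤ permDist σ τ :=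
  le_sup (f := fun i => Nat.dist (σ i : ℕ) (τ i)) (mem_univ i)

theorem exists_le_dist_of_le_permDist {d : ℕ} (hd : 0 < d) {σ τ : Perm (Fin n)}
    (h : d ≤ permDist σ τ) : ∃ i, d ≤ Nat.dist (σ i) (τ i) := by
  obtain ⟨i, -, hi⟩ := (Finset.le_sup_iff hd).1 h
  exact ⟨i, hi⟩

theorem card_le_P {d : ℕ} {A : Finset (Perm (Fin n))} (hA : IsPermCode d A) : #A ≤ P n d :=
  le_csSup ⟨Fintype.card (Perm (Fin n)), by rintro k ⟨B, -, rfl⟩; exact card_le_univ B⟩ ⟨A, hA, rfl⟩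

theorem P_le_of_forall_card_le {d C : ℕ}
    (h : ∀ A : Finset (Perm (Fin n)), IsPermCode d A → #A ≤ C) : P n d ≤ C :=
  csSup_le ⟨0, ∅, by simp, rfl⟩ <| by rintro k ⟨A, hA, rfl⟩; exact h A hA

end PermCode

def extremes (d r : ℕ) : Finset (Fin (d + r)) :=
  univ.filter fun v => (v : ℕ) < r ∨ d ≤ v

theorem card_extremes_le (d r : ℕ) : #(extremes d r) ≤ 2 * r :=
  calc #(extremes d r) ≤ #(range r ∪ Ico d (d + r)) :=
        card_le_card_of_injOn Fin.val (fun v hv => by simp [extremes] at hv; simp; omega)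
          Fin.val_injective.injOn
    _ ≤ 2 * r := (card_union_le _ _).trans (by simp; omega)

/- In `{0, …, d + r - 1}` two values at distance at least `d` are both within `r` of an end. -/
theorem separatedOn_extremes {d r : ℕ} (hd : 0 < d) {A : Finset (Perm (Fin (d + r)))}
    (hA : IsPermCode d A) : SeparatedOn (extremes d r) A := by
  intro σ hσ τ hτ hne
  obtain ⟨i, hi⟩ := exists_le_dist_of_le_permDist hd (hA σ hσ τ hτ hne)
  have hσi := (σ i).isLt
  have hτi := (τ i).isLt
  simp only [Nat.dist] at hi
  refine ⟨i, ?_, ?_, fun h => by rw [h] at hi; omega⟩ <;> simp only [extremes, mem_filter,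
    mem_univ, true_and] <;> omega

theorem P_add_le (d r : ℕ) (hd : 0 < d) : P (d + r) d ≤ (2 * r + 1)! ^ 2 :=
  P_le_of_forall_card_le fun _ hA => (card_le_of_separatedOn (separatedOn_extremes hd hA)).trans
    (by gcongr; exact card_extremes_le d r)

theorem Fin.val_succAbove {n : ℕ} (p : Fin (n + 1)) (i : Fin n) :
    (p.succAbove i : ℕ) = if (i : ℕ) < p then (i : ℕ) else (i : ℕ) + 1 := by
  unfold Fin.succAbove
  split_ifs with h h' h' <;> simp_all [Fin.lt_def, Fin.val_succ]

/- Insert a fixed point at position and value `r`: the values of a far pair straddle `r`,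
so only the larger one is shifted up and their distance grows by one. -/
theorem P_le_P_add_one {d r : ℕ} (hd : 0 < d) (hrd : r ≤ d) :
    P (d + r) d ≤ P (d + r + 1) (d + 1) := by
  let p : Fin (d + r + 1) := ⟨r, by omega⟩
  let ext : Perm (Fin (d + r)) → Perm (Fin (d + r + 1)) :=
    fun σ => σ.extendDomain (finSuccAboveEquiv p)
  have ext_apply (σ : Perm (Fin (d + r))) (i : Fin (d + r)) :
      ext σ (p.succAbove i) = p.succAbove (σ i) :=
    σ.extendDomain_apply_image (finSuccAboveEquiv p) i
  have ext_injective : Function.Injective ext := Perm.extendDomainHom_injective _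
  refine P_le_of_forall_card_le fun A hA => ?_
  rw [← card_image_of_injective A ext_injective]
  refine card_le_P fun σ' hσ' τ' hτ' hne => ?_
  obtain ⟨σ, hσ, rfl⟩ := mem_image.1 hσ'
  obtain ⟨τ, hτ, rfl⟩ := mem_image.1 hτ'
  obtain ⟨i, hi⟩ := exists_le_dist_of_le_permDist hd (hA σ hσ τ hτ (ne_of_apply_ne ext hne))
  refine le_trans ?_ (dist_le_permDist _ _ (p.succAbove i))
  have hσi := (σ i).isLt
  have hτi := (τ i).isLt
  rw [ext_apply, ext_apply, Fin.val_succAbove, Fin.val_succAbove]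
  simp only [Nat.dist, p] at hi ⊢
  split_ifs <;> omega

theorem Nat.exists_forall_ge_eq_of_monotone {f : ℕ → ℕ} (hf : Monotone f) {C : ℕ}
    (hC : ∀ k, f k ≤ C) : ∃ c k₀, ∀ k, k₀ ≤ k → f k = c := by
  have hbdd : BddAbove (Set.range f) := ⟨C, by rintro _ ⟨k, rfl⟩; exact hC k⟩
  obtain ⟨k₀, hk₀⟩ := Nat.sSup_mem (Set.range_nonempty f) hbdd
  exact ⟨_, k₀, fun k hk => le_antisymm (le_csSup hbdd ⟨k, rfl⟩) (hk₀ ▸ hf hk)⟩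

/-- For every fixed `r ≥ 1`, there exist constants `c_r` and `d_r` such that
`P(d + r, d) = c_r` for all `d ≥ d_r`. -/
theorem stmt13 (r : ℕ) (hr : 1 ≤ r) :
    ∃ c dr : ℕ, ∀ d : ℕ, dr ≤ d → P (d + r) d = c := by
  have hmono : Monotone fun k => P (k + r + r) (k + r) := monotone_nat_of_le_succ fun k => by
    have := P_le_P_add_one (d := k + r) (r := r) (by omega) (by omega)
    rwa [show k + r + r + 1 = k + 1 + r + r by omega, show k + r + 1 = k + 1 + r by omega] at this
  obtain ⟨c, k₀, hc⟩ := Nat.exists_forall_ge_eq_of_monotone hmono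
    fun k => P_add_le (k + r) r (by omega)
  refine ⟨c, k₀ + r, fun d hd => ?_⟩
  obtain ⟨k, rfl⟩ := Nat.exists_eq_add_of_le' (le_of_add_le_right hd)
  exact hc k (by omega)
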